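/- arXiv:1410.2084 — 2 statements merged into one kernel-verified Lean document; each statement's English description precedes it below -/
import Mathlib

section
/- For the real Ish arrangement Ish_ℓ with base chamber B = {x_1 < x_ℓ < x_{ℓ−1} < … < x_2}, we have Σ_{C ∈ Ch(Ish_ℓ)} t^{d(B,C)} = (1 + t + t^2 + … + t^ℓ)^{ℓ−1}. -/
noncomputable section

variable {V : Type*} [TopologicalSpace V] [AddCommGroup V] [Module ℝ V]

/-- Complement of an affine arrangement given by pairs (linear form, constant). -/
def arrCompl (A : Set ((V →ₗ[ℝ] ℝ) × ℝ)) : Set V := {v | ∀ p ∈ A, p.1 v ≠ p.2}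

/-- The chambers: connected components of the complement. -/
def chambers (A : Set ((V →ₗ[ℝ] ℝ) × ℝ)) : Set (Set V) :=
  {C | ∃ x ∈ arrCompl A, C = connectedComponentIn (arrCompl A) x}

/-- The hyperplane `p.1 = p.2` separates `B` from `C`. -/
def Separates (p : (V →ₗ[ℝ] ℝ) × ℝ) (B C : Set V) : Prop :=
  ((∀ v ∈ B, p.1 v < p.2) ∧ (∀ v ∈ C, p.2 < p.1 v)) ∨
    ((∀ v ∈ B, p.2 < p.1 v) ∧ (∀ v ∈ C, p.1 v < p.2))

/-- The number of hyperplanes of `A` separating `B` from `C`. -/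
def sepCount (A : Set ((V →ₗ[ℝ] ℝ) × ℝ)) (B C : Set V) : ℕ :=
  {p ∈ A | Separates p B C}.ncard

/-- coordinate projection -/
def pr {ι : Type*} (o : ι) : ((ι → ℝ) →ₗ[ℝ] ℝ) := LinearMap.proj o

/-- The Ish arrangement in `ℝ^ℓ`: hyperplanes `x_i - x_j = 0` and `x_1 - x_j = i`
for `1 ≤ i < j ≤ ℓ` (zero-based coordinates, so constants are `i+1`). -/
def ishArr (ℓ : ℕ) : Set (((Fin ℓ → ℝ) →ₗ[ℝ] ℝ) × ℝ) :=
  {p | ∃ i j : Fin ℓ, i < j ∧ p = (pr i - pr j, 0)} ∪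
    {p | ∃ i j : Fin ℓ, i < j ∧ p = (pr ⟨0, i.pos⟩ - pr j, ((i : ℕ) + 1 : ℝ))}

/-!
Put `z_j = x_1 - x_j`. Every Ish hyperplane is then attached to one coordinate `z_j` (`j ≥ 2`) as
`z_j = c` for one of its `ℓ` cuts `c ∈ {0, 1, …, j - 1} ∪ {z_k | k > j}`, and the base chamber is
`z_2 < ⋯ < z_ℓ < 0`, where each `z_j` lies below all of its cuts. So `d(B, C) = ∑_j m_j(C)`, where
`m_j(C) ∈ {0, …, ℓ}` counts the cuts lying below `z_j` on `C`. Going down from `j = ℓ`, the relative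
order of the cuts of `z_j` is fixed by the `m_k` with `k > j`, so `m` determines the chamber; and
placing each `z_j` in a suitable gap between its cuts shows that every `m ∈ {0, …, ℓ}^{ℓ-1}` occurs.

With zero-based indices, `zCoord v j = v 0 - v j` for `0 < j < n`, and the cuts of `z_j` are
`cut z j a` (`a : Fin n`): the constant `a` for `a ≤ j`, and `z_a` for `a > j`.
-/

open Finset

theorem Finset.filter_lt_eq_of_card_eq {ι α β : Type*} [LinearOrder α] [LinearOrder β]
    {s : Finset ι} {f : ι → α} {g : ι → β} {x : α} {y : β}
    (hfg : ∀ a ∈ s, ∀ b ∈ s, f a < f b → g a < g b)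
    (h : #(s.filter (f · < x)) = #(s.filter (g · < y))) :
    s.filter (f · < x) = s.filter (g · < y) := by
  have hnested : s.filter (f · < x) ⊆ s.filter (g · < y) ∨
      s.filter (g · < y) ⊆ s.filter (f · < x) := by
    by_contra! hc
    obtain ⟨a, ha, hag⟩ := not_subset.1 hc.1
    obtain ⟨b, hb, hbf⟩ := not_subset.1 hc.2
    simp only [mem_filter, not_and, not_lt] at ha hag hb hbf
    exact (hag ha.1).not_gt ((hfg a ha.1 b hb.1 (ha.2.trans_le (hbf hb.1))).trans hb.2)
  rcases hnested with hsub | hsub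
  · exact eq_of_subset_of_card_le hsub h.ge
  · exact (eq_of_subset_of_card_le hsub h.le).symm

theorem Finset.exists_notMem_card_filter_lt_eq {α : Type*} [LinearOrder α] [DenselyOrdered α]
    [NoMinOrder α] [NoMaxOrder α] [Nonempty α] (s : Finset α) {m : ℕ} (hm : m ≤ #s) :
    ∃ x ∉ s, #(s.filter (· < x)) = m := by
  -- a strict lower bound `b` on `s` makes the induction on the minimum of `s` go through
  suffices h : ∀ b, (∀ c ∈ s, b < c) → ∀ m ≤ #s, ∃ x ∉ s, b < x ∧ #(s.filter (· < x)) = m by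
    obtain ⟨b₀, hb₀⟩ := s.bddBelow
    obtain ⟨b, hb⟩ := exists_lt b₀
    obtain ⟨x, hx, -, hxm⟩ := h b (fun c hc => hb.trans_le (hb₀ hc)) m hm
    exact ⟨x, hx, hxm⟩
  clear hm m
  induction s using Finset.induction_on_min with
  | empty =>
    intro b _ m hm
    obtain rfl : m = 0 := by simpa using hm
    obtain ⟨x, hx⟩ := exists_gt b
    exact ⟨x, notMem_empty x, hx, by simp⟩
  | insert a s has ih =>
    intro b hb m hm
    have has' : a ∉ s := fun h => lt_irrefl a (has a h)
    cases m with
    | zero =>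
      obtain ⟨x, hbx, hxa⟩ := _root_.exists_between (hb a (mem_insert_self a s))
      refine ⟨x, fun hx => ?_, hbx, ?_⟩
      · rcases mem_insert.1 hx with rfl | hx
        · exact lt_irrefl x hxa
        · exact lt_asymm hxa (has x hx)
      · rw [card_eq_zero, filter_eq_empty_iff]
        intro c hc
        rcases mem_insert.1 hc with rfl | hc
        · exact hxa.not_gt
        · exact (hxa.trans (has c hc)).not_gt
    | succ m =>
      rw [card_insert_of_notMem has'] at hm
      obtain ⟨x, hxs, hax, hxm⟩ := ih a has m (by omega)
      refine ⟨x, fun hx => ?_, (hb a (mem_insert_self a s)).trans hax, ?_⟩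
      · rcases mem_insert.1 hx with rfl | hx
        · exact lt_irrefl x hax
        · exact hxs hx
      · rw [filter_insert, if_pos hax, card_insert_of_notMem fun h => has' (mem_filter.1 h).1, hxm]

theorem sign_eq_sign_iff {x y : ℝ} (hx : x ≠ 0) (hy : y ≠ 0) :
    SignType.sign x = SignType.sign y ↔ (0 < x ↔ 0 < y) := by
  rcases hx.lt_or_gt with hx | hx <;> rcases hy.lt_or_gt with hy | hy <;>
    simp [sign_neg, sign_pos, hx, hy, hx.not_gt, hy.not_gt]

namespace AffineArrangement

variable {E : Type*} [AddCommGroup E] [Module ℝ E] {A : Set ((E →ₗ[ℝ] ℝ) × ℝ)}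
  {p : (E →ₗ[ℝ] ℝ) × ℝ} {b v w : E}

def cell (A : Set ((E →ₗ[ℝ] ℝ) × ℝ)) (v : E) : Set E :=
  {w | ∀ p ∈ A, SignType.sign (p.1 w - p.2) = SignType.sign (p.1 v - p.2)}

theorem mem_cell_self (A : Set ((E →ₗ[ℝ] ℝ) × ℝ)) (v : E) : v ∈ cell A v := fun _ _ => rfl

theorem cell_eq_of_mem (h : w ∈ cell A v) : cell A w = cell A v := by
  ext u
  exact forall₂_congr fun p hp => by rw [h p hp]

theorem cell_eq_biInter (A : Set ((E →ₗ[ℝ] ℝ) × ℝ)) (v : E) :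
    cell A v = ⋂ p ∈ A, {w | SignType.sign (p.1 w - p.2) = SignType.sign (p.1 v - p.2)} := by
  ext
  simp [cell]

theorem sign_sub_ne_zero (hv : v ∈ arrCompl A) (hp : p ∈ A) : SignType.sign (p.1 v - p.2) ≠ 0 := by
  rw [Ne, sign_eq_zero_iff, sub_eq_zero]
  exact hv p hp

theorem cell_subset_arrCompl (hv : v ∈ arrCompl A) : cell A v ⊆ arrCompl A := fun w hw p hp h =>
  sign_sub_ne_zero hv hp (by rw [← hw p hp, h, sub_self, sign_zero])

theorem setOf_sign_eq_eq_halfSpace (f : E →ₗ[ℝ] ℝ) {c : ℝ} (hv : f v ≠ c) :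
    {w | SignType.sign (f w - c) = SignType.sign (f v - c)} = {w | f w < c} ∨
      {w | SignType.sign (f w - c) = SignType.sign (f v - c)} = {w | c < f w} := by
  rcases hv.lt_or_gt with h | h
  · left
    ext w
    simp [sign_neg (sub_neg.2 h), sign_eq_neg_one_iff]
  · right
    ext w
    simp [sign_pos (sub_pos.2 h), sign_eq_one_iff]

theorem convex_cell (hv : v ∈ arrCompl A) : Convex ℝ (cell A v) := by
  rw [cell_eq_biInter]
  refine convex_iInter₂ fun p hp => ?_
  rcases setOf_sign_eq_eq_halfSpace p.1 (hv p hp) with h | h <;> rw [h]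
  · exact convex_halfSpace_lt p.1.isLinear _
  · exact convex_halfSpace_gt p.1.isLinear _

theorem separates_cell_iff (hb : b ∈ arrCompl A) (hp : p ∈ A) :
    Separates p (cell A b) (cell A v) ↔
      SignType.sign (p.1 b - p.2) = -SignType.sign (p.1 v - p.2) := by
  constructor
  · rintro (⟨hb', hv'⟩ | ⟨hb', hv'⟩)
    · rw [sign_neg (sub_neg.2 (hb' b (mem_cell_self A b))),
        sign_pos (sub_pos.2 (hv' v (mem_cell_self A v)))]
    · rw [sign_pos (sub_pos.2 (hb' b (mem_cell_self A b))),
        sign_neg (sub_neg.2 (hv' v (mem_cell_self A v))), neg_neg]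
  · intro h
    rcases (hb p hp).lt_or_gt with hlt | hgt
    · have hsb : SignType.sign (p.1 b - p.2) = -1 := sign_neg (sub_neg.2 hlt)
      have hsv : SignType.sign (p.1 v - p.2) = 1 := neg_inj.1 (h.symm.trans hsb)
      exact Or.inl ⟨fun w hw => sub_neg.1 (sign_eq_neg_one_iff.1 ((hw p hp).trans hsb)),
        fun w hw => sub_pos.1 (sign_eq_one_iff.1 ((hw p hp).trans hsv))⟩
    · have hsb : SignType.sign (p.1 b - p.2) = 1 := sign_pos (sub_pos.2 hgt)
      have hsv : SignType.sign (p.1 v - p.2) = -1 := neg_eq_iff_eq_neg.1 (h.symm.trans hsb)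
      exact Or.inr ⟨fun w hw => sub_pos.1 (sign_eq_one_iff.1 ((hw p hp).trans hsb)),
        fun w hw => sub_neg.1 (sign_eq_neg_one_iff.1 ((hw p hp).trans hsv))⟩

section Topology

variable [TopologicalSpace E]

theorem isOpen_cell (hA : A.Finite) (hcont : ∀ p ∈ A, Continuous p.1) (hv : v ∈ arrCompl A) :
    IsOpen (cell A v) := by
  rw [cell_eq_biInter]
  refine hA.isOpen_biInter fun p hp => ?_
  rcases setOf_sign_eq_eq_halfSpace p.1 (hv p hp) with h | h <;> rw [h]
  · exact isOpen_lt (hcont p hp) continuous_const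
  · exact isOpen_lt continuous_const (hcont p hp)

variable [ContinuousAdd E] [ContinuousSMul ℝ E]

theorem connectedComponentIn_eq_cell (hA : A.Finite) (hcont : ∀ p ∈ A, Continuous p.1)
    (hv : v ∈ arrCompl A) : connectedComponentIn (arrCompl A) v = cell A v := by
  refine subset_antisymm ?_ ((convex_cell hv).isPreconnected.subset_connectedComponentIn
    (mem_cell_self A v) (cell_subset_arrCompl hv))
  -- the other cells form an open complement of `cell A v` in `arrCompl A`
  refine isPreconnected_connectedComponentIn.subset_left_of_subset_union (isOpen_cell hA hcont hv)
    (isOpen_biUnion (s := arrCompl A \ cell A v) fun w hw => isOpen_cell hA hcont hw.1) ?_ ?_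
    ⟨v, mem_connectedComponentIn hv, mem_cell_self A v⟩
  · refine Set.disjoint_left.2 fun x hxv hxW => ?_
    obtain ⟨w, ⟨-, hwv⟩, hxw⟩ := Set.mem_iUnion₂.1 hxW
    exact hwv ((cell_eq_of_mem hxw).symm.trans (cell_eq_of_mem hxv) ▸ mem_cell_self A w)
  · refine (connectedComponentIn_subset _ _).trans fun x hx => ?_
    by_cases hxv : x ∈ cell A v
    · exact Or.inl hxv
    · exact Or.inr (Set.mem_iUnion₂.2 ⟨x, ⟨hx, hxv⟩, mem_cell_self A x⟩)

theorem chambers_eq_image_cell (hA : A.Finite) (hcont : ∀ p ∈ A, Continuous p.1) :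
    chambers A = cell A '' arrCompl A := by
  ext C
  refine exists_congr fun x => and_congr_right fun hx => ?_
  rw [connectedComponentIn_eq_cell hA hcont hx, eq_comm]

end Topology

end AffineArrangement

namespace Ish

open AffineArrangement

variable {n : ℕ}

def zCoord (v : Fin n → ℝ) (j : Fin n) : ℝ := v ⟨0, j.pos⟩ - v j

def cut (z : Fin n → ℝ) (j a : Fin n) : ℝ := if a ≤ j then (a : ℕ) else z a

def lower (z : Fin n → ℝ) (j : Fin n) : Finset (Fin n) := univ.filter fun a => cut z j a < z j

def AvoidsCuts (z : Fin n → ℝ) (j : Fin n) : Prop := ∀ a, z j ≠ cut z j a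

section Cuts

variable {z z' : Fin n → ℝ} {j k a b : Fin n}

theorem cut_of_le (h : a ≤ j) : cut z j a = (a : ℕ) := if_pos h

theorem cut_of_lt (h : j < a) : cut z j a = z a := if_neg h.not_ge

theorem mem_lower : a ∈ lower z j ↔ cut z j a < z j := by simp [lower]

theorem card_lower_lt : #(lower z j) < n + 1 :=
  Nat.lt_succ_of_le ((card_le_univ _).trans_eq (Fintype.card_fin n))

theorem cut_injective (hz : ∀ k, j < k → AvoidsCuts z k) : Function.Injective (cut z j) := by
  intro a b hab
  by_contra hne
  wlog hlt : a < b generalizing a b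
  · exact this hab.symm (Ne.symm hne) ((not_lt.1 hlt).lt_of_ne (Ne.symm hne))
  rcases le_or_gt b j with hbj | hjb
  · rw [cut_of_le (hlt.le.trans hbj), cut_of_le hbj, Nat.cast_inj] at hab
    exact hne (Fin.ext hab)
  rcases le_or_gt a j with haj | hja
  · rw [cut_of_le haj, cut_of_lt hjb] at hab
    exact hz b hjb a (by rw [cut_of_le (haj.trans hjb.le), hab])
  · rw [cut_of_lt hja, cut_of_lt hjb] at hab
    exact hz a hja b (by rw [cut_of_lt hlt, hab])

theorem lt_cut_of_notMem_lower (hz : AvoidsCuts z j) (h : a ∉ lower z j) : z j < cut z j a :=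
  (not_lt.1 (mt mem_lower.2 h)).lt_of_ne (hz a)

theorem cut_lt_cut_of_lower_eq (hz' : ∀ k, j < k → AvoidsCuts z' k)
    (h : ∀ k, j < k → lower z k = lower z' k) (hab : cut z j a < cut z j b) :
    cut z' j a < cut z' j b := by
  rcases le_or_gt a j with haj | hja <;> rcases le_or_gt b j with hbj | hjb
  · rwa [cut_of_le haj, cut_of_le hbj] at hab ⊢
  · have hab' : a ≤ b := haj.trans hjb.le
    rw [cut_of_le haj, cut_of_lt hjb] at hab ⊢
    have ha : a ∈ lower z' b := by rw [← h b hjb, mem_lower, cut_of_le hab']; exact hab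
    rwa [mem_lower, cut_of_le hab'] at ha
  · have hba : b ≤ a := hbj.trans hja.le
    rw [cut_of_lt hja, cut_of_le hbj] at hab ⊢
    have hb : b ∉ lower z' a := by rw [← h a hja, mem_lower, cut_of_le hba]; exact hab.not_gt
    simpa only [cut_of_le hba] using lt_cut_of_notMem_lower (hz' a hja) hb
  · rw [cut_of_lt hja, cut_of_lt hjb] at hab ⊢
    rcases lt_trichotomy a b with hlt | rfl | hgt
    · have hb : b ∉ lower z' a := by rw [← h a hja, mem_lower, cut_of_lt hlt]; exact hab.not_gt
      simpa only [cut_of_lt hlt] using lt_cut_of_notMem_lower (hz' a hja) hb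
    · exact absurd hab (lt_irrefl _)
    · have ha : a ∈ lower z' b := by rw [← h b hjb, mem_lower, cut_of_lt hgt]; exact hab
      rwa [mem_lower, cut_of_lt hgt] at ha

theorem lower_eq_of_card_lower_eq (hz' : ∀ k : Fin n, 0 < (k : ℕ) → AvoidsCuts z' k)
    (h : ∀ k : Fin n, 0 < (k : ℕ) → #(lower z k) = #(lower z' k)) :
    ∀ j : Fin n, 0 < (j : ℕ) → lower z j = lower z' j := by
  intro j
  induction j using WellFoundedGT.induction with
  | _ j ih =>
    intro hj
    have hpos : ∀ k, j < k → 0 < (k : ℕ) := fun k hk => hj.trans hk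
    exact filter_lt_eq_of_card_eq
      (fun a _ b _ => cut_lt_cut_of_lower_eq (fun k hk => hz' k (hpos k hk))
        fun k hk => ih k hk (hpos k hk))
      (h j hj)

theorem cut_update_of_le (h : j ≤ k) (x : ℝ) : cut (Function.update z j x) k = cut z k := by
  funext a
  unfold cut
  split_ifs with ha
  · rfl
  · exact Function.update_of_ne (by rintro rfl; exact ha h) _ _

theorem lower_update_of_lt (h : j < k) (x : ℝ) :
    lower (Function.update z j x) k = lower z k := by
  simp only [lower, cut_update_of_le h.le, Function.update_of_ne h.ne']

theorem avoidsCuts_update_of_lt (h : j < k) (x : ℝ) :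
    AvoidsCuts (Function.update z j x) k ↔ AvoidsCuts z k := by
  simp only [AvoidsCuts, cut_update_of_le h.le, Function.update_of_ne h.ne']

theorem exists_avoidsCuts_card_lower_update (hz : ∀ k, j < k → AvoidsCuts z k) {m : ℕ}
    (hm : m ≤ n) :
    ∃ x, AvoidsCuts (Function.update z j x) j ∧ #(lower (Function.update z j x) j) = m := by
  have hcard : #(univ.image (cut z j)) = n := by
    rw [card_image_of_injective _ (cut_injective hz), card_univ, Fintype.card_fin]
  obtain ⟨x, hx, hxm⟩ := (univ.image (cut z j)).exists_notMem_card_filter_lt_eq (hcard ▸ hm)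
  refine ⟨x, fun a ha => hx ?_, ?_⟩
  · rw [cut_update_of_le le_rfl, Function.update_self] at ha
    exact ha ▸ mem_image_of_mem _ (mem_univ a)
  · rw [← hxm, filter_image, card_image_of_injective _ (cut_injective hz)]
    simp [lower, cut_update_of_le le_rfl]

theorem zCoord_update {v : Fin n → ℝ} (hj : 0 < (j : ℕ)) (x : ℝ) :
    zCoord (Function.update v j (v ⟨0, j.pos⟩ - x)) = Function.update (zCoord v) j x := by
  have h0 : (⟨0, j.pos⟩ : Fin n) ≠ j := Fin.ne_of_val_ne hj.ne
  funext i
  rcases eq_or_ne i j with rfl | hi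
  · simp [zCoord, h0]
  · simp [zCoord, hi, h0]

theorem exists_avoidsCuts_card_lower_eq (μ : Fin n → ℕ) (hμ : ∀ j, μ j ≤ n) :
    ∃ v : Fin n → ℝ, ∀ j : Fin n, 0 < (j : ℕ) →
      AvoidsCuts (zCoord v) j ∧ #(lower (zCoord v) j) = μ j := by
  -- choose `z_j` for `j = n - 1, n - 2, …, 1` in turn
  suffices h : ∀ d, ∃ v : Fin n → ℝ, ∀ j : Fin n, 0 < (j : ℕ) → n ≤ j + d →
      AvoidsCuts (zCoord v) j ∧ #(lower (zCoord v) j) = μ j by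
    obtain ⟨v, hv⟩ := h n
    exact ⟨v, fun j hj => hv j hj (by omega)⟩
  intro d
  induction d with
  | zero => exact ⟨0, fun j _ h => absurd h (by omega)⟩
  | succ d ih =>
    obtain ⟨v, hv⟩ := ih
    by_cases hd : n ≤ d + 1
    · exact ⟨v, fun j hj h => hv j hj (by omega)⟩
    set j₀ : Fin n := ⟨n - (d + 1), by omega⟩
    have hj₀ : 0 < (j₀ : ℕ) := by simp only [j₀]; omega
    obtain ⟨x, hx, hxμ⟩ := exists_avoidsCuts_card_lower_update (z := zCoord v) (j := j₀)
      (fun k hk => (hv k (by omega) (by simp only [j₀, Fin.lt_def] at hk; omega)).1) (hμ j₀)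
    refine ⟨Function.update v j₀ (v ⟨0, j₀.pos⟩ - x), fun j hj hjd => ?_⟩
    rw [zCoord_update hj₀]
    rcases eq_or_lt_of_le (show j₀ ≤ j by simp only [j₀, Fin.le_def]; omega) with rfl | hlt
    · exact ⟨hx, hxμ⟩
    · rw [avoidsCuts_update_of_lt hlt, lower_update_of_lt hlt]
      exact hv j hj (by simp only [j₀, Fin.lt_def] at hlt; omega)

end Cuts

abbrev PosIdx (n : ℕ) := {j : Fin n // 0 < (j : ℕ)}

theorem card_posIdx : Fintype.card (PosIdx n) = n - 1 := by
  cases n with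
  | zero => rfl
  | succ k => simp [Fintype.card_subtype, Fin.card_filter_univ_succ]

def hyp (j a : Fin n) : ((Fin n → ℝ) →ₗ[ℝ] ℝ) × ℝ :=
  if a ≤ j then (pr ⟨0, j.pos⟩ - pr j, (a : ℕ)) else (pr j - pr a, 0)

theorem hyp_apply_sub (v : Fin n → ℝ) (j a : Fin n) :
    (hyp j a).1 v - (hyp j a).2 =
      (if a ≤ j then 1 else -1) * (zCoord v j - cut (zCoord v) j a) := by
  unfold hyp cut zCoord
  split_ifs <;> simp [pr]

theorem sign_hyp_apply_sub (v : Fin n → ℝ) (j a : Fin n) :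
    SignType.sign ((hyp j a).1 v - (hyp j a).2) =
      (if a ≤ j then 1 else -1) * SignType.sign (zCoord v j - cut (zCoord v) j a) := by
  rw [hyp_apply_sub, sign_mul]
  split_ifs <;> simp

theorem ishArr_eq_range : ishArr n = Set.range fun x : PosIdx n × Fin n => hyp x.1.1 x.2 := by
  ext p
  constructor
  · rintro (⟨⟨_ | i, hi⟩, j, hij, rfl⟩ | ⟨i, j, hij, rfl⟩)
    · exact ⟨(⟨j, hij⟩, ⟨0, hi⟩), by simp [hyp, Fin.le_def]⟩
    · exact ⟨(⟨⟨i + 1, hi⟩, i.succ_pos⟩, j), by simp [hyp, hij.not_ge]⟩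
    · exact ⟨(⟨j, (Nat.zero_le _).trans_lt hij⟩, ⟨i + 1, by omega⟩),
        by simp [hyp, Fin.le_def, Nat.succ_le_of_lt hij]⟩
  · rintro ⟨⟨⟨j, hj⟩, ⟨_ | i, ha⟩⟩, rfl⟩
    · exact Or.inl ⟨⟨0, ha⟩, j, hj, by simp [hyp, Fin.le_def]⟩
    · by_cases hij : (⟨i + 1, ha⟩ : Fin n) ≤ j
      · exact Or.inr ⟨⟨i, by omega⟩, j, hij, by simp [hyp, hij]⟩
      · exact Or.inl ⟨j, ⟨i + 1, ha⟩, lt_of_not_ge hij, by simp [hyp, hij]⟩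

theorem pr_sub_pr_inj {i j i' j' : Fin n} (hij : i ≠ j)
    (h : (pr i - pr j : (Fin n → ℝ) →ₗ[ℝ] ℝ) = pr i' - pr j') : i = i' ∧ j = j' := by
  have hi := LinearMap.congr_fun h (Pi.single i 1)
  have hj := LinearMap.congr_fun h (Pi.single j 1)
  simp only [pr, LinearMap.sub_apply, LinearMap.proj_apply, Pi.single_apply, if_pos, if_neg hij,
    if_neg hij.symm] at hi hj
  constructor
  · by_contra hne
    rw [if_neg (Ne.symm hne)] at hi
    split_ifs at hi <;> norm_num at hi
  · by_contra hne
    rw [if_neg (Ne.symm hne)] at hj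
    split_ifs at hj <;> norm_num at hj

theorem hyp_injective : Function.Injective fun x : PosIdx n × Fin n => hyp x.1.1 x.2 := by
  rintro ⟨⟨j, hj⟩, a⟩ ⟨⟨j', hj'⟩, a'⟩ h
  have h0 : ∀ {k : Fin n}, 0 < (k : ℕ) → (⟨0, k.pos⟩ : Fin n) ≠ k := fun hk =>
    Fin.ne_of_val_ne hk.ne
  simp only [hyp] at h
  split_ifs at h with ha ha'
  all_goals simp only [Prod.mk.injEq] at h
  · obtain ⟨-, rfl⟩ := pr_sub_pr_inj (h0 hj) h.1
    simp_all [Fin.ext_iff]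
  · exact absurd (pr_sub_pr_inj (h0 hj) h.1).1 (h0 hj')
  · exact absurd (pr_sub_pr_inj (lt_of_not_ge ha).ne h.1).1.symm (h0 hj)
  · obtain ⟨rfl, rfl⟩ := pr_sub_pr_inj (lt_of_not_ge ha).ne h.1
    rfl

section Chambers

variable {v w : Fin n → ℝ}

theorem hyp_mem_ishArr (j : PosIdx n) (a : Fin n) : hyp j.1 a ∈ ishArr n := by
  rw [ishArr_eq_range]
  exact ⟨(j, a), rfl⟩

theorem ishArr_finite : (ishArr n).Finite := by
  rw [ishArr_eq_range]
  exact Set.finite_range _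

theorem mem_arrCompl_ishArr_iff :
    v ∈ arrCompl (ishArr n) ↔ ∀ j : Fin n, 0 < (j : ℕ) → AvoidsCuts (zCoord v) j := by
  simp only [arrCompl, ishArr_eq_range, Set.forall_mem_range, Prod.forall,
    Subtype.forall, AvoidsCuts]
  refine forall₂_congr fun j hj => forall_congr' fun a => ?_
  rw [← sub_ne_zero, hyp_apply_sub, ← sub_ne_zero (a := zCoord v j)]
  split_ifs <;> simp [sub_eq_zero, eq_comm]

theorem mem_cell_ishArr_iff : w ∈ cell (ishArr n) v ↔ ∀ j : Fin n, 0 < (j : ℕ) → ∀ a,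
    SignType.sign (zCoord w j - cut (zCoord w) j a) =
      SignType.sign (zCoord v j - cut (zCoord v) j a) := by
  simp only [cell, ishArr_eq_range, Set.forall_mem_range, Prod.forall,
    Subtype.forall, sign_hyp_apply_sub]
  refine forall₂_congr fun j hj => forall_congr' fun a => mul_right_inj' ?_
  split_ifs <;> decide

theorem mem_cell_ishArr_iff_lower_eq (hv : v ∈ arrCompl (ishArr n))
    (hw : w ∈ arrCompl (ishArr n)) :
    w ∈ cell (ishArr n) v ↔ ∀ j : Fin n, 0 < (j : ℕ) → lower (zCoord w) j = lower (zCoord v) j := by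
  rw [mem_arrCompl_ishArr_iff] at hv hw
  rw [mem_cell_ishArr_iff]
  refine forall₂_congr fun j hj => ?_
  rw [Finset.ext_iff]
  refine forall_congr' fun a => ?_
  rw [mem_lower, mem_lower, ← sub_pos, ← sub_pos (a := zCoord v j)]
  exact sign_eq_sign_iff (sub_ne_zero.2 (hw j hj a)) (sub_ne_zero.2 (hv j hj a))

def basePoint (n : ℕ) : Fin n → ℝ := fun i => if (i : ℕ) = 0 then 0 else (n : ℝ) - (i : ℕ)

theorem zCoord_basePoint_lt_cut {j : Fin n} (hj : 0 < (j : ℕ)) (a : Fin n) :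
    zCoord (basePoint n) j < cut (zCoord (basePoint n)) j a := by
  have hz : ∀ k : Fin n, 0 < (k : ℕ) → zCoord (basePoint n) k = (k : ℕ) - (n : ℝ) := fun k hk => by
    simp [zCoord, basePoint, hk.ne']
  have hjn : ((j : ℕ) : ℝ) < n := by exact_mod_cast j.2
  rcases le_or_gt a j with haj | hja
  · rw [cut_of_le haj, hz j hj]
    have : (0 : ℝ) ≤ (a : ℕ) := Nat.cast_nonneg _
    linarith
  · rw [cut_of_lt hja, hz j hj, hz a (hj.trans hja)]
    have : ((j : ℕ) : ℝ) < (a : ℕ) := by exact_mod_cast hja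
    linarith

theorem basePoint_mem_arrCompl : basePoint n ∈ arrCompl (ishArr n) :=
  mem_arrCompl_ishArr_iff.2 fun _ hj a => (zCoord_basePoint_lt_cut hj a).ne

abbrev baseChamber (n : ℕ) (hn : 0 < n) : Set (Fin n → ℝ) :=
  {v | v ⟨0, hn⟩ < v ⟨n - 1, Nat.sub_lt hn Nat.one_pos⟩ ∧
    ∀ i j : Fin n, 0 < (i : ℕ) → i < j → v j < v i}

theorem mem_baseChamber_iff (hn : 2 ≤ n) : w ∈ baseChamber n (by omega) ↔
    ∀ j : Fin n, 0 < (j : ℕ) → ∀ a, zCoord w j < cut (zCoord w) j a := by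
  constructor
  · rintro ⟨hlast, hdec⟩ j hj a
    have hneg : zCoord w j < 0 := by
      unfold zCoord
      rcases eq_or_lt_of_le (show (j : ℕ) ≤ n - 1 by omega) with h | h
      · rw [show j = ⟨n - 1, by omega⟩ from Fin.ext h]
        linarith
      · linarith [hdec j ⟨n - 1, by omega⟩ hj h]
    rcases le_or_gt a j with haj | hja
    · rw [cut_of_le haj]
      exact hneg.trans_le (Nat.cast_nonneg _)
    · rw [cut_of_lt hja]
      unfold zCoord
      linarith [hdec j a hj hja]
  · intro h
    refine ⟨?_, fun i j hi hij => ?_⟩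
    · have hlast := h ⟨n - 1, by omega⟩ (show 0 < n - 1 by omega) ⟨0, by omega⟩
      rw [cut_of_le (by simp [Fin.le_def])] at hlast
      simp only [zCoord, Nat.cast_zero, sub_neg] at hlast
      exact hlast
    · have hij' := h i hi j
      rw [cut_of_lt hij] at hij'
      unfold zCoord at hij'
      linarith

theorem baseChamber_eq_cell (hn : 2 ≤ n) :
    baseChamber n (by omega) = cell (ishArr n) (basePoint n) := by
  ext w
  rw [mem_baseChamber_iff hn, mem_cell_ishArr_iff]
  refine forall₂_congr fun j hj => forall_congr' fun a => ?_
  rw [sign_neg (sub_neg.2 (zCoord_basePoint_lt_cut hj a)), sign_eq_neg_one_iff, sub_neg]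

theorem separates_hyp_iff (hn : 0 < n) (j : PosIdx n) (a : Fin n) :
    Separates (hyp j.1 a) (baseChamber n hn) (cell (ishArr n) v) ↔ a ∈ lower (zCoord v) j := by
  have hn2 : 2 ≤ n := by have := j.1.2; have := j.2; omega
  rw [baseChamber_eq_cell hn2, separates_cell_iff basePoint_mem_arrCompl (hyp_mem_ishArr j a),
    sign_hyp_apply_sub, sign_hyp_apply_sub, sign_neg (sub_neg.2 (zCoord_basePoint_lt_cut j.2 a)),
    ← mul_neg, mul_right_inj' (by split_ifs <;> decide), eq_comm, neg_inj, sign_eq_one_iff,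
    sub_pos, mem_lower]

theorem sepCount_baseChamber_cell (hn : 0 < n) (v : Fin n → ℝ) :
    sepCount (ishArr n) (baseChamber n hn) (cell (ishArr n) v) =
      ∑ j : PosIdx n, #(lower (zCoord v) j) := by
  have hset : {p ∈ ishArr n | Separates p (baseChamber n hn) (cell (ishArr n) v)} =
      (fun x : PosIdx n × Fin n => hyp x.1.1 x.2) ''
        ↑(univ.filter fun x : PosIdx n × Fin n => x.2 ∈ lower (zCoord v) x.1) := by
    ext p
    constructor
    · rintro ⟨hp, hsep⟩
      rw [ishArr_eq_range] at hp
      obtain ⟨x, rfl⟩ := hp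
      exact ⟨x, by simpa using (separates_hyp_iff hn x.1 x.2).1 hsep, rfl⟩
    · rintro ⟨x, hx, rfl⟩
      exact ⟨hyp_mem_ishArr x.1 x.2, (separates_hyp_iff hn x.1 x.2).2 (by simpa using hx)⟩
  rw [sepCount, hset, Set.ncard_image_of_injective _ hyp_injective, Set.ncard_coe_finset,
    card_filter, Fintype.sum_prod_type]
  simp only [sum_boole, filter_mem_eq_inter, univ_inter, Nat.cast_id]

theorem exists_mem_arrCompl_card_lower_eq (μ : PosIdx n → Fin (n + 1)) :
    ∃ v ∈ arrCompl (ishArr n), ∀ j : PosIdx n, #(lower (zCoord v) j) = μ j := by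
  obtain ⟨v, hv⟩ := exists_avoidsCuts_card_lower_eq
    (fun j => if hj : 0 < (j : ℕ) then (μ ⟨j, hj⟩ : ℕ) else 0)
    (fun j => by split_ifs; exacts [Nat.lt_succ_iff.1 (μ _).2, Nat.zero_le n])
  exact ⟨v, mem_arrCompl_ishArr_iff.2 fun j hj => (hv j hj).1,
    fun j => by simpa [j.2] using (hv j j.2).2⟩

def rep (μ : PosIdx n → Fin (n + 1)) : Fin n → ℝ :=
  (exists_mem_arrCompl_card_lower_eq μ).choose

theorem rep_mem_arrCompl (μ : PosIdx n → Fin (n + 1)) : rep μ ∈ arrCompl (ishArr n) :=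
  (exists_mem_arrCompl_card_lower_eq μ).choose_spec.1

theorem card_lower_rep (μ : PosIdx n → Fin (n + 1)) (j : PosIdx n) :
    #(lower (zCoord (rep μ)) j) = μ j :=
  (exists_mem_arrCompl_card_lower_eq μ).choose_spec.2 j

def chamber (μ : PosIdx n → Fin (n + 1)) : Set (Fin n → ℝ) := cell (ishArr n) (rep μ)

theorem bijOn_chamber : Set.BijOn (chamber (n := n)) Set.univ (chambers (ishArr n)) := by
  have hch := chambers_eq_image_cell (ishArr_finite (n := n)) fun p _ =>
    p.1.continuous_of_finiteDimensional
  refine ⟨fun μ _ => ?_, fun μ _ μ' _ h => ?_, fun C hC => ?_⟩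
  · rw [hch]
    exact ⟨rep μ, rep_mem_arrCompl μ, rfl⟩
  · have hmem : rep μ' ∈ chamber μ := h ▸ mem_cell_self _ _
    have hlower :=
      (mem_cell_ishArr_iff_lower_eq (rep_mem_arrCompl μ) (rep_mem_arrCompl μ')).1 hmem
    funext j
    exact Fin.ext (by rw [← card_lower_rep μ j, ← card_lower_rep μ' j, hlower j j.2])
  · rw [hch] at hC
    obtain ⟨v, hv, rfl⟩ := hC
    refine ⟨fun j => ⟨#(lower (zCoord v) j), card_lower_lt⟩, trivial, cell_eq_of_mem ?_⟩
    rw [mem_cell_ishArr_iff_lower_eq hv (rep_mem_arrCompl _)]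
    exact lower_eq_of_card_lower_eq (mem_arrCompl_ishArr_iff.1 hv)
      fun k hk => card_lower_rep _ ⟨k, hk⟩

theorem sepCount_chamber (hn : 0 < n) (μ : PosIdx n → Fin (n + 1)) :
    sepCount (ishArr n) (baseChamber n hn) (chamber μ) = ∑ j, (μ j : ℕ) := by
  simp only [chamber, sepCount_baseChamber_cell, card_lower_rep]

end Chambers

end Ish

/-- Wall-crossing formula for the Ish arrangement with base chamber
`B = {x₁ < x_ℓ < x_{ℓ-1} < ⋯ < x₂}`:
`∑_C t^{d(B,C)} = (1 + t + t² + ⋯ + t^ℓ)^{ℓ-1}`. -/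
theorem ish_wall_crossing (ℓ : ℕ) (hl : 1 ≤ ℓ) :
    ∀ t : ℝ,
      (∑ᶠ C ∈ chambers (ishArr ℓ),
          t ^ sepCount (ishArr ℓ)
            {v : Fin ℓ → ℝ | v ⟨0, by omega⟩ < v ⟨ℓ - 1, by omega⟩ ∧
              ∀ i j : Fin ℓ, 0 < (i : ℕ) → i < j → v j < v i}
            C) =
        (∑ m ∈ Finset.range (ℓ + 1), t ^ m) ^ (ℓ - 1) := by
  intro t
  calc _ = ∑ᶠ μ ∈ (Set.univ : Set (Ish.PosIdx ℓ → Fin (ℓ + 1))), t ^ ∑ j, (μ j : ℕ) :=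
        (finsum_mem_eq_of_bijOn _ Ish.bijOn_chamber fun μ _ => by
          rw [Ish.sepCount_chamber hl]).symm
    _ = ∏ _j : Ish.PosIdx ℓ, ∑ m : Fin (ℓ + 1), t ^ (m : ℕ) := by
        rw [finsum_mem_univ, finsum_eq_sum_of_fintype, Finset.prod_univ_sum]
        simp [Finset.prod_pow_eq_pow_sum]
    _ = _ := by
        rw [prod_const, card_univ, Ish.card_posIdx, Fin.sum_univ_eq_sum_range (t ^ ·)]

end
end

section
/- For a subgraph G ⊆ K_ℓ, N_G is a nest if and only if there exists a permutation w of {1,…,ℓ} such that w^{-1}G ⊆ K_ℓ (i.e., (i,j) ∈ w^{-1}G implies i < j) and w^{-1}G satisfies: whenever 1 ≤ i < j < k ≤ ℓ and (i,j) ∈ w^{-1}G, then (i,k) ∈ w^{-1}G. -/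
/-!
Let `C j = {i | (i, j) ∈ G}`. Since `N_j` is `C_j` shifted by one with `0` adjoined and `C_1` is
empty, `N_G` is a nest iff the sets `C_j` are pairwise comparable, which is also what the
condition on `w` amounts to. Given `w`, every element of `C (w j)` is some `w i` with `i < j`, so
`C (w j) ⊆ C (w k)` for `j < k`. Conversely, sorting the `C_j` by inclusion gives a `w` with
`j ↦ C (w j)` monotone, and no edge `(a, b)` can go backwards along it, since that would give
`a ∈ C_b ⊆ C_a`.
-/

/-- `N` (a tuple of sets indexed by `Fin n`) is a nest: after a permutation, the sets
form a chain under inclusion. -/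
def IsNest {n : ℕ} {α : Type*} (N : Fin n → Set α) : Prop :=
  ∃ w : Equiv.Perm (Fin n), ∀ i j : Fin n, i ≤ j → N (w i) ⊆ N (w j)

/-- `N_G`: for `j : Fin n` (representing the 1-based column index `j+2`), the set
`{0} ∪ {i : (i, j) ∈ G}` of 1-based row indices (edge `(i, j.succ)` in zero-based
coordinates contributes the 1-based constant `i+1`).  Here `ℓ = n+1` and `G` is a set
of edges of the complete graph on `{1, …, ℓ}` in zero-based indexing. -/
def NG {n : ℕ} (G : Set (Fin (n + 1) × Fin (n + 1))) (j : Fin n) : Set ℕ :=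
  {0} ∪ {m | ∃ i : Fin (n + 1), (i, j.succ) ∈ G ∧ m = (i : ℕ) + 1}

def inNeighbors {ι : Type*} (G : Set (ι × ι)) (j : ι) : Set ι := {i | (i, j) ∈ G}

@[simp]
lemma mem_inNeighbors {ι : Type*} {G : Set (ι × ι)} {i j : ι} :
    i ∈ inNeighbors G j ↔ (i, j) ∈ G := Iff.rfl

section Sorting

variable {m : ℕ}

open Finset in
lemma exists_perm_monotone_of_total {β : Type*} [Preorder β] (N : Fin m → β)
    (h : ∀ i j, N i ≤ N j ∨ N j ≤ N i) :
    ∃ w : Equiv.Perm (Fin m), Monotone (N ∘ w) := by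
  classical
  let key : Fin m → ℕ := fun j => #{k | N k ≤ N j}
  have key_lt : ∀ a b, N a < N b → key a < key b := fun a b hab => by
    refine Finset.card_lt_card <| (Finset.ssubset_iff_of_subset ?_).2 ⟨b, ?_, ?_⟩
    · intro k
      simpa using fun hk => hk.trans hab.le
    · simp
    · simpa using hab.not_ge
  refine ⟨Tuple.sort key, fun i j hij => ?_⟩
  by_contra hne
  have hlt := lt_of_le_not_ge ((h _ _).resolve_left hne) hne
  exact (key_lt _ _ hlt).not_ge (Tuple.monotone_sort key hij)

lemma isNest_iff_total {α : Type*} (N : Fin m → Set α) :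
    IsNest N ↔ ∀ i j, N i ⊆ N j ∨ N j ⊆ N i := by
  constructor
  · rintro ⟨w, hw⟩ i j
    simpa using (le_total (w.symm i) (w.symm j)).imp (hw _ _) (hw _ _)
  · exact fun h => (exists_perm_monotone_of_total N h).imp fun w hw i j hij => hw hij

end Sorting

section NG

variable {n : ℕ} {G : Set (Fin (n + 1) × Fin (n + 1))}

lemma NG_eq_insert_image (j : Fin n) :
    NG G j = insert 0 ((fun i : Fin (n + 1) => (i : ℕ) + 1) '' inNeighbors G j.succ) := by
  ext m
  simp [NG, eq_comm]

lemma NG_subset_NG_iff (j₁ j₂ : Fin n) :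
    NG G j₁ ⊆ NG G j₂ ↔ inNeighbors G j₁.succ ⊆ inNeighbors G j₂.succ := by
  rw [NG_eq_insert_image, NG_eq_insert_image, Set.insert_subset_insert_iff (by simp),
    Set.image_subset_image_iff fun a b h => Fin.ext (by simpa using h)]

lemma isNest_NG_iff (hG₀ : ∀ i, (i, 0) ∉ G) :
    IsNest (NG G) ↔
      ∀ a b, inNeighbors G a ⊆ inNeighbors G b ∨ inNeighbors G b ⊆ inNeighbors G a := by
  have empty_zero : inNeighbors G 0 = ∅ := Set.eq_empty_of_forall_notMem hG₀
  simp only [isNest_iff_total, NG_subset_NG_iff]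
  refine ⟨fun h a b => ?_, fun h a b => h _ _⟩
  cases a using Fin.cases with
  | zero => simp [empty_zero]
  | succ a =>
    cases b using Fin.cases with
    | zero => simp [empty_zero]
    | succ b => exact h a b

end NG

lemma inNeighbors_subset_of_perm {ι : Type*} [LinearOrder ι] {G : Set (ι × ι)}
    {w : Equiv.Perm ι} (hw₁ : ∀ e ∈ G, w.symm e.1 < w.symm e.2)
    (hw₂ : ∀ i j k, i < j → j < k → (w i, w j) ∈ G → (w i, w k) ∈ G)
    {a b : ι} (hab : w.symm a ≤ w.symm b) : inNeighbors G a ⊆ inNeighbors G b := by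
  intro r hr
  rcases hab.eq_or_lt with h | h
  · rwa [← w.symm.injective h]
  · simpa using hw₂ _ _ _ (hw₁ _ hr) h (by simpa using hr)

lemma exists_perm_iff_inNeighbors_total {m : ℕ} {G : Set (Fin m × Fin m)}
    (hirr : ∀ i, (i, i) ∉ G) :
    (∃ w : Equiv.Perm (Fin m), (∀ e ∈ G, w.symm e.1 < w.symm e.2) ∧
        ∀ i j k, i < j → j < k → (w i, w j) ∈ G → (w i, w k) ∈ G) ↔
      ∀ a b, inNeighbors G a ⊆ inNeighbors G b ∨ inNeighbors G b ⊆ inNeighbors G a := by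
  constructor
  · rintro ⟨w, hw₁, hw₂⟩ a b
    exact (le_total (w.symm a) (w.symm b)).imp (inNeighbors_subset_of_perm hw₁ hw₂)
      (inNeighbors_subset_of_perm hw₁ hw₂)
  · intro htot
    obtain ⟨w, hw⟩ := exists_perm_monotone_of_total (inNeighbors G) htot
    refine ⟨w, fun e he => ?_, fun i j k _ hjk hij => hw hjk.le hij⟩
    by_contra hle
    have hback : inNeighbors G e.2 ⊆ inNeighbors G e.1 := by
      simpa using hw (not_lt.1 hle)
    exact hirr e.1 (hback he)

/-- `N_G` is a nest iff there is a permutation `w` of `{1,…,ℓ}` such that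
`w⁻¹G ⊆ K_ℓ` (i.e. `(i,j) ∈ w⁻¹G` implies `i < j`) and whenever `i < j < k` and
`(i,j) ∈ w⁻¹G`, also `(i,k) ∈ w⁻¹G`.  Here `w⁻¹G = {(w⁻¹ a, w⁻¹ b) : (a,b) ∈ G}`,
so `(i,j) ∈ w⁻¹G ↔ (w i, w j) ∈ G`. -/
theorem NG_nest_iff_perm (n : ℕ) (G : Set (Fin (n + 1) × Fin (n + 1)))
    (hG : ∀ e ∈ G, e.1 < e.2) :
    IsNest (NG G) ↔
      ∃ w : Equiv.Perm (Fin (n + 1)),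
        (∀ e ∈ G, w.symm e.1 < w.symm e.2) ∧
        (∀ i j k : Fin (n + 1), i < j → j < k →
          (w i, w j) ∈ G → (w i, w k) ∈ G) := by
  rw [isNest_NG_iff fun i hi => Fin.not_lt_zero _ (hG _ hi),
    exists_perm_iff_inNeighbors_total fun i hi => lt_irrefl _ (hG _ hi)]
end
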